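/- The groups Γ₅ = ⟨a,b,c,d ∣ acac⁻¹, adad⁻¹, bcb⁻¹c, bdb⁻¹d⟩ and Γ₁₀ = ⟨a,b,c,d ∣ acac⁻¹, ada⁻¹d, bcbc⁻¹, bdb⁻¹d⁻¹⟩ are isomorphic, via the map sending a↦d, b↦ac, c↦a, d↦ab. -/
import Mathlib


namespace BMGroups

/-- Generators a, b, c, d of the free group on four letters. -/
def a : FreeGroup (Fin 4) := FreeGroup.of 0
def b : FreeGroup (Fin 4) := FreeGroup.of 1
def c : FreeGroup (Fin 4) := FreeGroup.of 2
def d : FreeGroup (Fin 4) := FreeGroup.of 3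

/-- Relators of Γ₄ = ⟨a,b,c,d ∣ acac⁻¹, adad⁻¹, bcbd, bc⁻¹bd⁻¹⟩. -/
def rels4 : Set (FreeGroup (Fin 4)) :=
  {a * c * a * c⁻¹, a * d * a * d⁻¹, b * c * b * d, b * c⁻¹ * b * d⁻¹}

/-- Relators of Γ₃₀ = ⟨a,b,c,d ∣ acad, ac⁻¹ad⁻¹, bcbd, bc⁻¹bd⁻¹⟩. -/
def rels30 : Set (FreeGroup (Fin 4)) :=
  {a * c * a * d, a * c⁻¹ * a * d⁻¹, b * c * b * d, b * c⁻¹ * b * d⁻¹}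

/-- Relators of Γ₅ = ⟨a,b,c,d ∣ acac⁻¹, adad⁻¹, bcb⁻¹c, bdb⁻¹d⟩. -/
def rels5 : Set (FreeGroup (Fin 4)) :=
  {a * c * a * c⁻¹, a * d * a * d⁻¹, b * c * b⁻¹ * c, b * d * b⁻¹ * d}

/-- Relators of Γ₁₀ = ⟨a,b,c,d ∣ acac⁻¹, ada⁻¹d, bcbc⁻¹, bdb⁻¹d⁻¹⟩. -/
def rels10 : Set (FreeGroup (Fin 4)) :=
  {a * c * a * c⁻¹, a * d * a⁻¹ * d, b * c * b * c⁻¹, b * d * b⁻¹ * d⁻¹}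

/-- The group Γ₄. -/
abbrev G4 := PresentedGroup rels4
/-- The group Γ₃₀. -/
abbrev G30 := PresentedGroup rels30
/-- The group Γ₅. -/
abbrev G5 := PresentedGroup rels5
/-- The group Γ₁₀. -/
abbrev G10 := PresentedGroup rels10

/-- The images of the generators a,b,c,d in a presented group. -/
def gen {rels : Set (FreeGroup (Fin 4))} (i : Fin 4) : PresentedGroup rels :=
  PresentedGroup.of i

lemma rel_one {rels : Set (FreeGroup (Fin 4))} {r : FreeGroup (Fin 4)} (h : r ∈ rels) :
    (QuotientGroup.mk r : PresentedGroup rels) = 1 :=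
  (QuotientGroup.eq_one_iff r).mpr (Subgroup.subset_normalClosure h)

-- relations in G10
lemma h10_1 : (gen 0 : G10) * gen 2 * gen 0 * (gen 2)⁻¹ = 1 :=
  rel_one (show a*c*a*c⁻¹ ∈ rels10 by simp [rels10])
lemma h10_2 : (gen 0 : G10) * gen 3 * (gen 0)⁻¹ * gen 3 = 1 :=
  rel_one (show a*d*a⁻¹*d ∈ rels10 by simp [rels10])
lemma h10_3 : (gen 1 : G10) * gen 2 * gen 1 * (gen 2)⁻¹ = 1 :=
  rel_one (show b*c*b*c⁻¹ ∈ rels10 by simp [rels10])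
lemma h10_4 : (gen 1 : G10) * gen 3 * (gen 1)⁻¹ * (gen 3)⁻¹ = 1 :=
  rel_one (show b*d*b⁻¹*d⁻¹ ∈ rels10 by simp [rels10])

-- relations in G5
lemma h5_1 : (gen 0 : G5) * gen 2 * gen 0 * (gen 2)⁻¹ = 1 :=
  rel_one (show a*c*a*c⁻¹ ∈ rels5 by simp [rels5])
lemma h5_2 : (gen 0 : G5) * gen 3 * gen 0 * (gen 3)⁻¹ = 1 :=
  rel_one (show a*d*a*d⁻¹ ∈ rels5 by simp [rels5])
lemma h5_3 : (gen 1 : G5) * gen 2 * (gen 1)⁻¹ * gen 2 = 1 :=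
  rel_one (show b*c*b⁻¹*c ∈ rels5 by simp [rels5])
lemma h5_4 : (gen 1 : G5) * gen 3 * (gen 1)⁻¹ * gen 3 = 1 :=
  rel_one (show b*d*b⁻¹*d ∈ rels5 by simp [rels5])

/-- a ↦ d, b ↦ ac, c ↦ a, d ↦ ab -/
def f510 : Fin 4 → G10 := ![gen 3, gen 0 * gen 2, gen 0, gen 0 * gen 1]
/-- a ↦ c, b ↦ c⁻¹d, c ↦ c⁻¹b, d ↦ a -/
def f105 : Fin 4 → G5 := ![gen 2, (gen 2)⁻¹ * gen 3, (gen 2)⁻¹ * gen 1, gen 0]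

lemma lift510 : ∀ r ∈ rels5, FreeGroup.lift f510 r = 1 := by
  intro r hr
  have h1 := h10_1; have h2 := h10_2; have h3 := h10_3; have h4 := h10_4
  simp only [rels5, Set.mem_insert_iff, Set.mem_singleton_iff] at hr
  rcases hr with rfl | rfl | rfl | rfl <;> simp only [a, b, c, d, map_mul, map_inv,
    FreeGroup.lift_apply_of]
  · rw [show f510 0 * f510 2 * f510 0 * (f510 2)⁻¹
        = (gen 3) * ((gen 0) * (gen 3) * (gen 0)⁻¹ * (gen 3)) * (gen 3)⁻¹ from by
      show (gen 3 : G10) * gen 0 * gen 3 * (gen 0)⁻¹ = _; group, h2]; group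
  · rw [show f510 0 * f510 3 * f510 0 * (f510 3)⁻¹
        = ((gen 3)*(gen 0)) * ((gen 1)*(gen 3)*(gen 1)⁻¹*(gen 3)⁻¹) * (gen 0)⁻¹
            * ((gen 0)*(gen 3)*(gen 0)⁻¹*(gen 3)) * (gen 3)⁻¹ from by
      show (gen 3 : G10) * (gen 0 * gen 1) * gen 3 * (gen 0 * gen 1)⁻¹ = _; group, h4, h2]; group
  · rw [show f510 1 * f510 2 * (f510 1)⁻¹ * f510 2
        = (gen 0)*(gen 2)*(gen 0)*(gen 2)⁻¹ from by
      show (gen 0 : G10) * gen 2 * gen 0 * (gen 0 * gen 2)⁻¹ * gen 0 = _; group, h1]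
  · rw [show f510 1 * f510 3 * (f510 1)⁻¹ * f510 3
        = ((gen 0)*(gen 2)*(gen 0)*(gen 2)⁻¹)
            * ((gen 2)*((gen 1)*(gen 2))⁻¹*((gen 1)*(gen 2)*(gen 1)*(gen 2)⁻¹)*((gen 1)*(gen 2))*(gen 2)⁻¹) from by
      show (gen 0 : G10) * gen 2 * (gen 0 * gen 1) * (gen 0 * gen 2)⁻¹ * (gen 0 * gen 1) = _
      group, h1, h3]; group

lemma lift105 : ∀ r ∈ rels10, FreeGroup.lift f105 r = 1 := by
  intro r hr
  have k1 := h5_1; have k2 := h5_2; have k3 := h5_3; have k4 := h5_4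
  simp only [rels10, Set.mem_insert_iff, Set.mem_singleton_iff] at hr
  rcases hr with rfl | rfl | rfl | rfl <;> simp only [a, b, c, d, map_mul, map_inv,
    FreeGroup.lift_apply_of]
  · rw [show f105 0 * f105 2 * f105 0 * (f105 2)⁻¹
        = (gen 1)*(gen 2)*(gen 1)⁻¹*(gen 2) from by
      show (gen 2 : G5) * ((gen 2)⁻¹ * gen 1) * gen 2 * ((gen 2)⁻¹ * gen 1)⁻¹ = _; group, k3]
  · rw [show f105 0 * f105 3 * (f105 0)⁻¹ * f105 3
        = (gen 0)⁻¹ * ((gen 0)*(gen 2)*(gen 0)*(gen 2)⁻¹) * (gen 0) from by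
      show (gen 2 : G5) * gen 0 * (gen 2)⁻¹ * gen 0 = _; group, k1]; group
  · rw [show f105 1 * f105 2 * f105 1 * (f105 2)⁻¹
        = (gen 2)⁻¹*(gen 3)*(gen 2)⁻¹ * ((gen 2)*((gen 1)*(gen 2)*(gen 1)⁻¹*(gen 2))⁻¹*(gen 2)⁻¹*(gen 2))
            * ((gen 1)*(gen 3)*(gen 1)⁻¹*(gen 3)) * (gen 3)⁻¹ * (gen 2) from by
      show ((gen 2 : G5)⁻¹ * gen 3) * ((gen 2)⁻¹ * gen 1) * ((gen 2)⁻¹ * gen 3) * ((gen 2)⁻¹ * gen 1)⁻¹ = _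
      group, k3, k4]; group
  · rw [show f105 1 * f105 3 * (f105 1)⁻¹ * (f105 3)⁻¹
        = (gen 2)⁻¹*(gen 0)⁻¹*((gen 0)*(gen 3)*(gen 0)*(gen 3)⁻¹)*(gen 2)*(gen 0)⁻¹ from by
      show ((gen 2 : G5)⁻¹ * gen 3) * gen 0 * ((gen 2)⁻¹ * gen 3)⁻¹ * (gen 0)⁻¹ = _
      group, k2]
    rw [show (gen 2 : G5)⁻¹*(gen 0)⁻¹*(1:G5)*(gen 2)*(gen 0)⁻¹
        = ((gen 0)*(gen 2))⁻¹ * ((gen 0)*(gen 2)*(gen 0)*(gen 2)⁻¹)⁻¹ * ((gen 0)*(gen 2)) from by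
      group, k1]
    group

def phi : G5 →* G10 := PresentedGroup.toGroup lift510
def psi : G10 →* G5 := PresentedGroup.toGroup lift105

lemma comp1 : psi.comp phi = MonoidHom.id G5 := by
  apply PresentedGroup.ext
  intro x
  fin_cases x <;>
    simp [phi, psi, PresentedGroup.toGroup.of, f510, f105, gen, map_mul, map_inv]

lemma comp2 : phi.comp psi = MonoidHom.id G10 := by
  apply PresentedGroup.ext
  intro x
  fin_cases x <;>
    simp [phi, psi, PresentedGroup.toGroup.of, f510, f105, gen, map_mul, map_inv]


/-- Γ₅ ≅ Γ₁₀ via a ↦ d, b ↦ ac, c ↦ a, d ↦ ab. -/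
theorem G5_iso_G10 :
    ∃ φ : G5 ≃* G10,
      φ (gen 0) = gen 3 ∧
      φ (gen 1) = gen 0 * gen 2 ∧
      φ (gen 2) = gen 0 ∧
      φ (gen 3) = gen 0 * gen 1 := by
  refine ⟨MonoidHom.toMulEquiv phi psi comp1 comp2, ?_, ?_, ?_, ?_⟩ <;>
    simp [MonoidHom.toMulEquiv, phi, gen, PresentedGroup.toGroup.of, f510]

end BMGroups
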